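/- For every dynamic logic program P, every extended WS-model of P is an extended RD-model of P, i.e. WS'(P) ⊆ RD'(P). -/
import Mathlib


namespace RuleUpdates

/-- Objective literal: an atom (a natural number) or its strong negation. -/
inductive OLit where
  | pos : ℕ → OLit
  | neg : ℕ → OLit
deriving DecidableEq

/-- Strong negation on objective literals (with ¬¬p identified with p). -/
def OLit.compl : OLit → OLit
  | .pos p => .neg p
  | .neg p => .pos p

/-- Literal: an objective literal or its default negation (not not l = l). -/
inductive Lit where
  | obj : OLit → Lit
  | ndef : OLit → Lit
deriving DecidableEq

/-- Extended rule: a head literal and a finite set of body literals. -/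
structure Rule where
  head : Lit
  body : Finset Lit

/-- Interpretation: a consistent set of objective literals. -/
def Interp (J : Set OLit) : Prop :=
  ∀ p : ℕ, ¬ (OLit.pos p ∈ J ∧ OLit.neg p ∈ J)

/-- Satisfaction of a literal. -/
def satLit (J : Set OLit) : Lit → Prop
  | .obj l => l ∈ J
  | .ndef l => l ∉ J

/-- Satisfaction of a set of body literals. -/
def satBody (J : Set OLit) (B : Finset Lit) : Prop :=
  ∀ L ∈ B, satLit J L

/-- Satisfaction of a rule. -/
def satRule (J : Set OLit) (π : Rule) : Prop :=
  satBody J π.body → satLit J π.head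

/-- J is a model of a program. -/
def isModel (J : Set OLit) (P : Set Rule) : Prop :=
  ∀ π ∈ P, satRule J π

/-- J* = J ∪ { not l | l ∈ ℒ ∖ J }, as a set of literals. -/
def star (J : Set OLit) : Set Lit :=
  {L | ∃ l : OLit, (L = Lit.obj l ∧ l ∈ J) ∨ (L = Lit.ndef l ∧ l ∉ J)}

/-- def(J) = { (not l.) | l ∈ ℒ ∖ J }. -/
def defFacts (J : Set OLit) : Set Rule :=
  {π | ∃ l : OLit, l ∉ J ∧ π = ⟨Lit.ndef l, ∅⟩}

/-- S (a set of literals) is closed under program P, all literals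
treated as distinct propositional atoms. -/
def closedUnder (P : Set Rule) (S : Set Lit) : Prop :=
  ∀ π ∈ P, (π.body : Set Lit) ⊆ S → π.head ∈ S

/-- least(P): the least model of P when all literals are treated as
distinct propositional atoms. -/
def leastModel (P : Set Rule) : Set Lit :=
  ⋂₀ {S | closedUnder P S}

/-- Stable model of an extended program: J* = least(P ∪ def(J)). -/
def isStableModel (P : Set Rule) (J : Set OLit) : Prop :=
  Interp J ∧ star J = leastModel (P ∪ defFacts J)

/-- Level of a literal, with ℓ(not l) = ℓ(l). -/
def litLevel (ℓ : OLit → ℕ) : Lit → ℕ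
  | .obj l => ℓ l
  | .ndef l => ℓ l

/-- ℓ↑(S): the maximal level of a literal in the finite set S. -/
def supLevel (ℓ : OLit → ℕ) (S : Finset Lit) : ℕ :=
  S.sup (litLevel ℓ)

/-- ℓ↓(S): the minimal level of a literal in the finite set S. -/
noncomputable def infLevel (ℓ : OLit → ℕ) (S : Finset Lit) : ℕ :=
  sInf (litLevel ℓ '' (S : Set Lit))

/-- Well-supported model of an extended program w.r.t. a level mapping ℓ. -/
def isWSModelWith (P : Set Rule) (J : Set OLit) (ℓ : OLit → ℕ) : Prop :=
  isModel J P ∧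
    ∀ l ∈ J, ∃ π ∈ P, π.head = Lit.obj l ∧ satBody J π.body ∧
      supLevel ℓ π.body < ℓ l

/-- Well-supported model of an extended program. -/
def isWSModel (P : Set Rule) (J : Set OLit) : Prop :=
  Interp J ∧ ∃ ℓ : OLit → ℕ, isWSModelWith P J ℓ

/-- con(L): the literals in conflict with L. -/
def con : Lit → Finset Lit
  | .obj l => {Lit.ndef l, Lit.obj l.compl}
  | .ndef l => {Lit.obj l}

/-- ρ(P): all rules occurring in the components of the DLP. -/
def allRules {n : ℕ} (P : Fin n → Set Rule) : Set Rule :=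
  {π | ∃ i : Fin n, π ∈ P i}

/-- The rule π ∈ P i is rejected w.r.t. the set of literals S:
some later σ with conflicting head has its body included in S. -/
def rejIn {n : ℕ} (P : Fin n → Set Rule) (S : Set Lit) (i : Fin n) (π : Rule) : Prop :=
  ∃ j : Fin n, i < j ∧ ∃ σ ∈ P j, σ.head ∈ con π.head ∧ (σ.body : Set Lit) ⊆ S

/-- rem(P, S) = ρ(P) ∖ rej(P, S), as a set of component-indexed rules. -/
def remSet {n : ℕ} (P : Fin n → Set Rule) (S : Set Lit) : Set (Fin n × Rule) :=
  {x | x.2 ∈ P x.1 ∧ ¬ rejIn P S x.1 x.2}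

/-- The operator T_{P,J}. -/
def TOp {n : ℕ} (P : Fin n → Set Rule) (J : Set OLit) (S : Set Lit) : Set Lit :=
  {L | ((∃ x ∈ remSet P (star J), x.2.head = L ∧ (x.2.body : Set Lit) ⊆ S) ∨
        (∃ l : OLit, l ∉ J ∧ L = Lit.ndef l)) ∧
       ¬ ∃ σ ∈ remSet P S, σ.2.head ∈ con L ∧ (σ.2.body : Set Lit) ⊆ star J}

/-- Iterates of T_{P,J} starting from ∅. -/
def TIter {n : ℕ} (P : Fin n → Set Rule) (J : Set OLit) : ℕ → Set Lit
  | 0 => ∅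
  | k + 1 => TOp P J (TIter P J k)

/-- Extended RD-model of a DLP: J* = ⋃_{k≥0} T_{P,J}^k(∅). -/
def isExtRD {n : ℕ} (P : Fin n → Set Rule) (J : Set OLit) : Prop :=
  Interp J ∧ star J = ⋃ k : ℕ, TIter P J k

/-- rej^ℓ(P, J): π ∈ P i is rejected w.r.t. J and the level mapping ℓ. -/
def rejLvl {n : ℕ} (P : Fin n → Set Rule) (J : Set OLit) (ℓ : OLit → ℕ)
    (i : Fin n) (π : Rule) : Prop :=
  ∃ j : Fin n, i < j ∧ ∃ σ ∈ P j, σ.head ∈ con π.head ∧ satBody J σ.body ∧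
    supLevel ℓ σ.body < infLevel ℓ (con π.head)

/-- Extended WS-model of a DLP. -/
def isExtWS {n : ℕ} (P : Fin n → Set Rule) (J : Set OLit) : Prop :=
  Interp J ∧ ∃ ℓ : OLit → ℕ,
    (∀ i : Fin n, ∀ π ∈ P i, ¬ rejLvl P J ℓ i π → satRule J π) ∧
    (∀ l ∈ J, ∃ x ∈ remSet P (star J), x.2.head = Lit.obj l ∧ satBody J x.2.body ∧
      supLevel ℓ x.2.body < ℓ l)

/-- A program is acyclic w.r.t. a level mapping ℓ. -/
def acyclicWrt (Q : Set Rule) (ℓ : OLit → ℕ) : Prop :=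
  (∀ l : OLit, ℓ l = ℓ l.compl) ∧ ∀ π ∈ Q, supLevel ℓ π.body < litLevel ℓ π.head

lemma satLit_iff_mem_star {J : Set OLit} {L : Lit} : satLit J L ↔ L ∈ star J := by
  cases L with
  | obj l => simp [satLit, star]
  | ndef l => simp [satLit, star]

lemma satBody_iff {J : Set OLit} {B : Finset Lit} :
    satBody J B ↔ (B : Set Lit) ⊆ star J := by
  constructor
  · intro h L hL
    exact satLit_iff_mem_star.mp (h L hL)
  · intro h L hL
    exact satLit_iff_mem_star.mpr (h hL)

lemma OLit.compl_compl (l : OLit) : l.compl.compl = l := by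
  cases l <;> rfl

lemma compl_not_mem {J : Set OLit} (hJ : Interp J) {l : OLit} (hl : l ∈ J) :
    l.compl ∉ J := by
  cases l with
  | pos p => exact fun hn => hJ p ⟨hl, hn⟩
  | neg p => exact fun hn => hJ p ⟨hn, hl⟩

lemma not_sat_con {J : Set OLit} (hJ : Interp J) {L H : Lit}
    (hL : L ∈ star J) (hcon : H ∈ con L) : ¬ satLit J H := by
  cases L with
  | obj l =>
    have hl : l ∈ J := satLit_iff_mem_star.mpr hL
    simp only [con, Finset.mem_insert, Finset.mem_singleton] at hcon
    rcases hcon with rfl | rfl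
    · exact fun h => h hl
    · exact fun h => compl_not_mem hJ hl h
  | ndef l =>
    have hl : l ∉ J := satLit_iff_mem_star.mpr hL
    simp only [con, Finset.mem_singleton] at hcon
    subst hcon
    exact hl

lemma infLevel_con_con_le (ℓ : OLit → ℕ) {L H : Lit} (h : H ∈ con L) :
    infLevel ℓ (con H) ≤ litLevel ℓ L := by
  cases L with
  | obj l =>
    simp only [con, Finset.mem_insert, Finset.mem_singleton] at h
    rcases h with rfl | rfl
    · exact Nat.sInf_le ⟨Lit.obj l, by simp [con], rfl⟩
    · refine Nat.sInf_le ⟨Lit.obj l.compl.compl, by simp [con], ?_⟩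
      simp [OLit.compl_compl, litLevel]
  | ndef l =>
    simp only [con, Finset.mem_singleton] at h
    subst h
    exact Nat.sInf_le ⟨Lit.ndef l, by simp [con], rfl⟩

lemma rejLvl_imp_rejIn {n : ℕ} {P : Fin n → Set Rule} {J : Set OLit}
    {ℓ : OLit → ℕ} {i : Fin n} {π : Rule} (h : rejLvl P J ℓ i π) :
    rejIn P (star J) i π := by
  obtain ⟨j, hij, σ, hσ, hc, hsb, _⟩ := h
  exact ⟨j, hij, σ, hσ, hc, satBody_iff.mp hsb⟩

lemma TIter_subset_star {n : ℕ} {P : Fin n → Set Rule} {J : Set OLit}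
    {ℓ : OLit → ℕ}
    (h1 : ∀ i : Fin n, ∀ π ∈ P i, ¬ rejLvl P J ℓ i π → satRule J π) :
    ∀ k, TIter P J k ⊆ star J := by
  intro k
  induction k with
  | zero => simp [TIter]
  | succ k ih =>
    intro L hL
    obtain ⟨hor, _⟩ := hL
    rcases hor with ⟨x, hx, hhead, hbody⟩ | ⟨l, hl, rfl⟩
    · obtain ⟨hmem, hnrej⟩ := hx
      have hnr : ¬ rejLvl P J ℓ x.1 x.2 := fun h => hnrej (rejLvl_imp_rejIn h)
      have hsat : satRule J x.2 := h1 x.1 x.2 hmem hnr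
      have hb : satBody J x.2.body := satBody_iff.mpr (hbody.trans ih)
      rw [← hhead]
      exact satLit_iff_mem_star.mp (hsat hb)
    · exact ⟨l, Or.inr ⟨rfl, hl⟩⟩

lemma key_lemma {n : ℕ} {P : Fin n → Set Rule} {J : Set OLit} {ℓ : OLit → ℕ}
    (hJ : Interp J)
    (h1 : ∀ i : Fin n, ∀ π ∈ P i, ¬ rejLvl P J ℓ i π → satRule J π)
    (h2 : ∀ l ∈ J, ∃ x ∈ remSet P (star J), x.2.head = Lit.obj l ∧ satBody J x.2.body ∧
      supLevel ℓ x.2.body < ℓ l) :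
    ∀ m : ℕ, ∀ L ∈ star J, litLevel ℓ L < m → L ∈ TIter P J m := by
  intro m
  induction m using Nat.strong_induction_on with
  | _ m ih =>
    intro L hL hlt
    cases m with
    | zero => omega
    | succ m' =>
      -- The blocking condition fails for L
      have hblock : ¬ ∃ σ ∈ remSet P (TIter P J m'), σ.2.head ∈ con L ∧
          (σ.2.body : Set Lit) ⊆ star J := by
        rintro ⟨σ, ⟨hσmem, hσnrej⟩, hσcon, hσbody⟩
        have hσsb : satBody J σ.2.body := satBody_iff.mpr hσbody
        have hσnsat : ¬ satLit J σ.2.head := not_sat_con hJ hL hσcon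
        have hrej : rejLvl P J ℓ σ.1 σ.2 := by
          by_contra hc
          exact hσnsat (h1 σ.1 σ.2 hσmem hc hσsb)
        obtain ⟨j, hij, τ, hτ, hτcon, hτsb, hτlvl⟩ := hrej
        have hτlt : supLevel ℓ τ.body < litLevel ℓ L :=
          lt_of_lt_of_le hτlvl (infLevel_con_con_le ℓ hσcon)
        have hτsub : (τ.body : Set Lit) ⊆ TIter P J m' := by
          intro L' hL'
          have hL'star : L' ∈ star J := satBody_iff.mp hτsb hL'
          have hL'lvl : litLevel ℓ L' ≤ supLevel ℓ τ.body := Finset.le_sup hL'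
          exact ih m' (Nat.lt_succ_self m') L' hL'star (by omega)
        exact hσnrej ⟨j, hij, τ, hτ, hτcon, hτsub⟩
      cases L with
      | obj l =>
        have hl : l ∈ J := satLit_iff_mem_star.mpr hL
        obtain ⟨x, hx, hhead, hsb, hlvl⟩ := h2 l hl
        have hsub : (x.2.body : Set Lit) ⊆ TIter P J m' := by
          intro L' hL'
          have hL'star : L' ∈ star J := satBody_iff.mp hsb hL'
          have hL'lvl : litLevel ℓ L' ≤ supLevel ℓ x.2.body := Finset.le_sup hL'
          have : litLevel ℓ (Lit.obj l) < m' + 1 := hlt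
          simp only [litLevel] at this
          exact ih m' (Nat.lt_succ_self m') L' hL'star (by omega)
        exact ⟨Or.inl ⟨x, hx, hhead, hsub⟩, hblock⟩
      | ndef l =>
        have hl : l ∉ J := satLit_iff_mem_star.mpr hL
        exact ⟨Or.inr ⟨l, hl, rfl⟩, hblock⟩

/-- WS'(P) ⊆ RD'(P) for every DLP P. -/
theorem extWS_subset_extRD (n : ℕ) (P : Fin n → Set Rule) :
    {J : Set OLit | isExtWS P J} ⊆ {J : Set OLit | isExtRD P J} := by
  rintro J ⟨hJ, ℓ, h1, h2⟩
  refine ⟨hJ, ?_⟩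
  apply Set.Subset.antisymm
  · intro L hL
    exact Set.mem_iUnion.mpr ⟨litLevel ℓ L + 1,
      key_lemma hJ h1 h2 (litLevel ℓ L + 1) L hL (Nat.lt_succ_self _)⟩
  · intro L hL
    obtain ⟨_, ⟨k, rfl⟩, hk⟩ := hL
    exact TIter_subset_star h1 k hk

end RuleUpdates
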